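/- For the bidirected complete bipartite dependency structure (the 'thin cuboids' instance): in the unlabeled rearrangement instance whose dependency graph is the complete bipartite graph K_{n,n} between n start and n goal vertices, every plan requires exactly n − 1 running buffers. -/

import Mathlib

/-- A pick-n-place move in an unlabeled rearrangement instance with start vertices `S`
and goal vertices `G`: move the object at start `s` to the buffer, move a buffered
object to goal `g`, or move the object at start `s` directly to goal `g`. -/
inductive UMove (S G : Type*) where
  | toBuffer (s : S)
  | fromBuffer (g : G)
  | direct (s : S) (g : G)

/-- Effect of a move on the state `(R, F)`, where `R` is the set of start vertices whose
objects have been removed and `F` is the set of filled goal vertices.  The number of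
buffered objects in state `(R, F)` is `R.card - F.card`. -/
def ustep {S G : Type*} [DecidableEq S] [DecidableEq G] :
    UMove S G → Finset S × Finset G → Finset S × Finset G
  | .toBuffer s, (R, F) => (insert s R, F)
  | .fromBuffer g, (R, F) => (R, insert g F)
  | .direct s g, (R, F) => (insert s R, insert g F)

/-- The state reached after executing the moves in `l` from state `st`. -/
def uStateAfter {S G : Type*} [DecidableEq S] [DecidableEq G]
    (l : List (UMove S G)) (st : Finset S × Finset G) : Finset S × Finset G :=
  l.foldl (fun st m => ustep m st) st

/-- Validity of a sequence of moves from state `st`, for the bipartite dependency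
relation `adj` (`adj s g` meaning the disk at start `s` overlaps the disk at goal `g`):
an object can only be removed from a start once; a goal `g` can be filled from the
buffer only if the buffer is nonempty and all starts overlapping `g` have been cleared;
an object can be moved directly from start `s` to goal `g` only if all starts
overlapping `g` other than `s` itself have been cleared. -/
def uValidFrom {S G : Type*} [DecidableEq S] [DecidableEq G] (adj : S → G → Prop) :
    List (UMove S G) → Finset S × Finset G → Prop
  | [], _ => True
  | m :: rest, st =>
      (match m with
        | .toBuffer s => s ∉ st.1
        | .fromBuffer g => g ∉ st.2 ∧ st.2.card < st.1.card ∧ ∀ s, adj s g → s ∈ st.1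
        | .direct s g => s ∉ st.1 ∧ g ∉ st.2 ∧ ∀ s', adj s' g → s' ∈ insert s st.1) ∧
      uValidFrom adj rest (ustep m st)

/-- The peak buffer occupancy along the execution of `l` from state `st`. -/
def uPeakFrom {S G : Type*} [DecidableEq S] [DecidableEq G] :
    List (UMove S G) → Finset S × Finset G → ℕ
  | [], st => st.1.card - st.2.card
  | m :: rest, st => max (st.1.card - st.2.card) (uPeakFrom rest (ustep m st))

/-- A complete plan: a valid sequence of moves from the initial state which removes every
object from its start pose and fills every goal pose. -/
def UCompletePlan {S G : Type*} [DecidableEq S] [DecidableEq G] (adj : S → G → Prop)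
    (l : List (UMove S G)) : Prop :=
  uValidFrom adj l (∅, ∅) ∧
  (∀ s : S, s ∈ (uStateAfter l (∅, ∅)).1) ∧ (∀ g : G, g ∈ (uStateAfter l (∅, ∅)).2)

/-- The running buffer (peak buffer occupancy) of a plan. -/
def uPeak {S G : Type*} [DecidableEq S] [DecidableEq G] (l : List (UMove S G)) : ℕ :=
  uPeakFrom l (∅, ∅)

/-!
Lower bound: when the first goal is filled, no goal is filled yet and all `n` starts have been
cleared except possibly the one moved directly into it, so at least `n - 1` objects sit in the
buffer. Upper bound: buffer all objects but one, move that one directly to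
a goal, then empty the buffer into the remaining goals.
-/

namespace UMove

variable {S G : Type*} [DecidableEq S] [DecidableEq G]

lemma uStateAfter_cons (m : UMove S G) (l : List (UMove S G)) (st : Finset S × Finset G) :
    uStateAfter (m :: l) st = uStateAfter l (ustep m st) := rfl

lemma uStateAfter_append (a b : List (UMove S G)) (st : Finset S × Finset G) :
    uStateAfter (a ++ b) st = uStateAfter b (uStateAfter a st) :=
  List.foldl_append

lemma uValidFrom_append (adj : S → G → Prop) (a b : List (UMove S G))
    (st : Finset S × Finset G) :
    uValidFrom adj (a ++ b) st ↔ uValidFrom adj a st ∧ uValidFrom adj b (uStateAfter a st) := by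
  induction a generalizing st with
  | nil => simp [uValidFrom, uStateAfter]
  | cons m rest ih =>
    simp only [List.cons_append, uValidFrom, ih, uStateAfter_cons]
    tauto

lemma sub_le_uPeakFrom (l : List (UMove S G)) (st : Finset S × Finset G) :
    st.1.card - st.2.card ≤ uPeakFrom l st := by
  cases l with
  | nil => exact le_rfl
  | cons m rest => exact le_max_left _ _

lemma uPeakFrom_append (a b : List (UMove S G)) (st : Finset S × Finset G) :
    uPeakFrom (a ++ b) st = max (uPeakFrom a st) (uPeakFrom b (uStateAfter a st)) := by
  induction a generalizing st with
  | nil => exact (max_eq_right (sub_le_uPeakFrom b st)).symm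
  | cons m rest ih => simp only [List.cons_append, uPeakFrom, ih, uStateAfter_cons, max_assoc]

section ToBuffer

variable (ss : List S) (R : Finset S) (F : Finset G)

lemma uStateAfter_map_toBuffer :
    uStateAfter (ss.map toBuffer) (R, F) = (R ∪ ss.toFinset, F) := by
  induction ss generalizing R with
  | nil => simp [uStateAfter]
  | cons s rest ih =>
    simp only [List.map_cons, uStateAfter_cons, ustep, ih, List.toFinset_cons,
      Finset.insert_union, Finset.union_insert]

lemma uValidFrom_map_toBuffer (adj : S → G → Prop) (hnd : ss.Nodup)
    (hdisj : ∀ s ∈ ss, s ∉ R) : uValidFrom adj (ss.map toBuffer) (R, F) := by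
  induction ss generalizing R with
  | nil => trivial
  | cons s rest ih =>
    obtain ⟨hs_rest, hnd_rest⟩ := List.nodup_cons.1 hnd
    refine ⟨hdisj s List.mem_cons_self, ih _ hnd_rest fun t ht => ?_⟩
    simp only [Finset.mem_insert, not_or]
    exact ⟨fun h => hs_rest (h ▸ ht), hdisj t (List.mem_cons_of_mem _ ht)⟩

lemma uPeakFrom_map_toBuffer :
    uPeakFrom (ss.map toBuffer) (R, F) = (R ∪ ss.toFinset).card - F.card := by
  induction ss generalizing R with
  | nil => simp [uPeakFrom]
  | cons s rest ih =>
    simp only [List.map_cons, uPeakFrom, ustep, ih, List.toFinset_cons,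
      Finset.insert_union, Finset.union_insert]
    refine max_eq_right (Nat.sub_le_sub_right (Finset.card_le_card fun x hx => ?_) _)
    simp [hx]

end ToBuffer

section FromBuffer

variable (gs : List G) (R : Finset S) (F : Finset G)

lemma uStateAfter_map_fromBuffer :
    uStateAfter (gs.map fromBuffer) (R, F) = (R, F ∪ gs.toFinset) := by
  induction gs generalizing F with
  | nil => simp [uStateAfter]
  | cons g rest ih =>
    simp only [List.map_cons, uStateAfter_cons, ustep, ih, List.toFinset_cons,
      Finset.insert_union, Finset.union_insert]

lemma uValidFrom_map_fromBuffer (adj : S → G → Prop) (hnd : gs.Nodup)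
    (hdisj : ∀ g ∈ gs, g ∉ F) (hcard : F.card + gs.length ≤ R.card)
    (hcleared : ∀ g ∈ gs, ∀ s, adj s g → s ∈ R) :
    uValidFrom adj (gs.map fromBuffer) (R, F) := by
  induction gs generalizing F with
  | nil => trivial
  | cons g rest ih =>
    obtain ⟨hg_rest, hnd_rest⟩ := List.nodup_cons.1 hnd
    have hg : g ∉ F := hdisj g List.mem_cons_self
    simp only [List.length_cons] at hcard
    refine ⟨⟨hg, show F.card < R.card by omega, hcleared g List.mem_cons_self⟩,
      ih _ hnd_rest ?_ ?_ ?_⟩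
    · intro t ht
      simp only [Finset.mem_insert, not_or]
      exact ⟨fun h => hg_rest (h ▸ ht), hdisj t (List.mem_cons_of_mem _ ht)⟩
    · rw [Finset.card_insert_of_notMem hg]
      omega
    · exact fun t ht => hcleared t (List.mem_cons_of_mem _ ht)

lemma uPeakFrom_map_fromBuffer :
    uPeakFrom (gs.map fromBuffer) (R, F) = R.card - F.card := by
  induction gs generalizing F with
  | nil => rfl
  | cons g rest ih =>
    simp only [List.map_cons, uPeakFrom, ustep, ih]
    exact max_eq_left (Nat.sub_le_sub_left (Finset.card_le_card (Finset.subset_insert _ _)) _)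

end FromBuffer

lemma le_uPeakFrom_add_one {adj : S → G → Prop} {d : ℕ}
    (hdeg : ∀ g, d ≤ {s | adj s g}.ncard) (l : List (UMove S G)) (R : Finset S) {g : G}
    (hvalid : uValidFrom adj l (R, ∅)) (hfill : g ∈ (uStateAfter l (R, ∅)).2) :
    d ≤ uPeakFrom l (R, ∅) + 1 := by
  induction l generalizing R with
  | nil => simp [uStateAfter] at hfill
  | cons m rest ih =>
    have hR : R.card ≤ uPeakFrom (m :: rest) (R, ∅) := by
      simpa using sub_le_uPeakFrom (m :: rest) (R, ∅)
    cases m with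
    | toBuffer s =>
      exact (ih (insert s R) hvalid.2 hfill).trans (Nat.add_le_add_right (le_max_right _ _) 1)
    | fromBuffer g' =>
      obtain ⟨⟨-, -, hcleared⟩, -⟩ := hvalid
      have : d ≤ R.card := (hdeg g').trans <|
        (Set.ncard_le_ncard fun s hs => hcleared s hs).trans_eq (Set.ncard_coe_finset R)
      omega
    | direct s g' =>
      obtain ⟨⟨-, -, hcleared⟩, -⟩ := hvalid
      have : d ≤ (insert s R).card := (hdeg g').trans <|
        (Set.ncard_le_ncard fun s hs => hcleared s hs).trans_eq (Set.ncard_coe_finset _)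
      have := Finset.card_insert_le s R
      omega

lemma exists_completePlan_uPeak_eq [Fintype S] [Fintype G] (s₀ : S) (g₀ : G)
    (hcard : Fintype.card G ≤ Fintype.card S) :
    ∃ l : List (UMove S G),
      UCompletePlan (fun _ _ => True) l ∧ uPeak l = Fintype.card S - 1 := by
  set ss := (Finset.univ.erase s₀).toList
  set gs := (Finset.univ.erase g₀).toList
  have hbuffered : uStateAfter (ss.map toBuffer) ((∅ : Finset S), (∅ : Finset G)) =
      (Finset.univ.erase s₀, ∅) := by
    simp [uStateAfter_map_toBuffer, ss]
  have hfinal : uStateAfter (direct s₀ g₀ :: gs.map fromBuffer) (Finset.univ.erase s₀, ∅) =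
      (Finset.univ, Finset.univ) := by
    simp [uStateAfter_cons, ustep, uStateAfter_map_fromBuffer, gs]
  refine ⟨ss.map toBuffer ++ direct s₀ g₀ :: gs.map fromBuffer, ⟨?_, ?_, ?_⟩, ?_⟩
  · rw [uValidFrom_append, hbuffered]
    refine ⟨uValidFrom_map_toBuffer _ _ _ _ (Finset.nodup_toList _) (by simp),
      ⟨by simp, by simp, by simp⟩, ?_⟩
    refine uValidFrom_map_fromBuffer _ _ _ _ (Finset.nodup_toList _) (by simp [gs]) ?_
      (by simp)
    have : 0 < Fintype.card S := Fintype.card_pos_iff.2 ⟨s₀⟩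
    simp [gs, Finset.card_univ]
    omega
  · simp [uStateAfter_append, hbuffered, hfinal]
  · simp [uStateAfter_append, hbuffered, hfinal]
  · rw [uPeak, uPeakFrom_append, hbuffered, uPeakFrom_map_toBuffer]
    simp [uPeakFrom, ustep, uPeakFrom_map_fromBuffer, ss, Finset.card_univ]

end UMove

/-- For the unlabeled rearrangement instance whose dependency graph is
the complete bipartite graph `K_{n,n}` between `n` start and `n` goal vertices (the
'thin cuboids' instance), the minimum running buffer equals `n - 1`: every complete plan
needs at least `n - 1` running buffers, and some complete plan achieves `n - 1`. -/
theorem unlabeled_complete_bipartite_mrb (n : ℕ) :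
    (∀ l : List (UMove (Fin n) (Fin n)),
        UCompletePlan (fun _ _ => True) l → n - 1 ≤ uPeak l) ∧
    (∃ l : List (UMove (Fin n) (Fin n)),
        UCompletePlan (fun _ _ => True) l ∧ uPeak l = n - 1) := by
  cases n with
  | zero =>
    exact ⟨fun _ _ => Nat.zero_le _, [], ⟨trivial, fun s => s.elim0, fun g => g.elim0⟩, rfl⟩
  | succ m =>
    refine ⟨fun l ⟨hvalid, _, hfill⟩ => ?_, ?_⟩
    · have hdeg (g : Fin (m + 1)) : m + 1 ≤ {s : Fin (m + 1) | True}.ncard := by simp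
      simpa [uPeak] using UMove.le_uPeakFrom_add_one hdeg l ∅ hvalid (hfill 0)
    · simpa using UMove.exists_completePlan_uPeak_eq (0 : Fin (m + 1)) 0 le_rfl
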